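/- Let {X, S_i, p_i}_{i∈I} be a measurable iterated function system with invariant probability measure μ, and let p_x be the Borel probability measures on Σ = I^ℕ determined by p_x(C_{ω^n}) = p_{ω^n}(x). Define the probability measure ν on X × Σ by ν(d(x,ω)) = p_x(dω) μ(dx). Then ν is invariant under the skew product S : (x,ω) ↦ (S_{ω₁}(x), σω), where σ is the left shift on Σ. -/

import Mathlib

/-!
Both measures are finite and the rectangles `A ×ˢ C_l` form a generating π-system, so it
suffices to compare them on rectangles, where `ν (A ×ˢ C_l) = ∫_A p_l dμ`. The slice at `x` of
the preimage of `A ×ˢ C_l` under the skew product is the disjoint union of the cylinders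
`C_{il}` over those `i` with `S_i x ∈ A`, so its `p_x`-mass is
`∑ i, p_i(x) 1_A(S_i x) p_l(S_i x)`. Invariance of `μ`, in the integrated form
`∫ f dμ = ∫ ∑ i, p_i (f ∘ S_i) dμ`, applied to `f = 1_A p_l` closes the argument.
-/

open MeasureTheory Set
open scoped ENNReal NNReal

def iterWord {I X : Type*} (S : I → X → X) : List I → X → X
  | [], x => x
  | i :: l, x => iterWord S l (S i x)

def wtWord {I X : Type*} (S : I → X → X) (p : I → X → ℝ) : List I → X → ℝ
  | [], _ => 1
  | i :: l, x => p i x * wtWord S p l (S i x)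

def cylinder {I : Type*} (l : List I) : Set (ℕ → I) :=
  {ξ | ∀ (k : ℕ) (h : k < l.length), ξ k = l.get ⟨k, h⟩}

section Cylinders

variable {I : Type*}

lemma cylinder_nil : cylinder ([] : List I) = univ := by
  ext ξ; simp [_root_.cylinder]

lemma mem_cylinder_cons {i : I} {l : List I} {ω : ℕ → I} :
    ω ∈ cylinder (i :: l) ↔ ω 0 = i ∧ (fun n => ω (n + 1)) ∈ cylinder l := by
  constructor
  · intro h
    exact ⟨h 0 (Nat.succ_pos _), fun k hk => h (k + 1) (Nat.succ_lt_succ hk)⟩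
  · rintro ⟨h0, h⟩ (_ | k) hk
    · exact h0
    · exact h k (Nat.lt_of_succ_lt_succ hk)

lemma mem_cylinder_ofFn {n : ℕ} {w : Fin n → I} {ξ : ℕ → I} :
    ξ ∈ cylinder (List.ofFn w) ↔ ∀ k : Fin n, ξ k = w k := by
  simp [_root_.cylinder, Fin.forall_iff]

lemma setOf_apply_eq_iUnion_cylinder (n : ℕ) (i : I) :
    {ξ : ℕ → I | ξ n = i} =
      ⋃ v : Fin n → I, cylinder (List.ofFn (Fin.snoc v i : Fin (n + 1) → I)) := by
  ext ξ
  simp only [mem_ofPred_eq, mem_iUnion, mem_cylinder_ofFn]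
  constructor
  · rintro rfl
    exact ⟨fun k => ξ k, Fin.lastCases (by simp) fun k => by simp⟩
  · rintro ⟨v, hv⟩
    simpa using hv (Fin.last n)

lemma isPiSystem_range_cylinder : IsPiSystem (range (cylinder (I := I))) := by
  suffices key : ∀ l m : List I, l.length ≤ m.length →
      (cylinder l ∩ cylinder m).Nonempty → cylinder l ∩ cylinder m = cylinder m by
    rintro _ ⟨l, rfl⟩ _ ⟨m, rfl⟩ hne
    rcases le_total l.length m.length with h | h
    · exact ⟨m, (key l m h hne).symm⟩
    · exact ⟨l, by rw [inter_comm, key m l h (inter_comm _ _ ▸ hne)]⟩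
  rintro l m h ⟨ξ, hξl, hξm⟩
  refine inter_eq_self_of_subset_right fun η hη k hk => ?_
  calc η k = m.get ⟨k, hk.trans_le h⟩ := hη k _
    _ = ξ k := (hξm k _).symm
    _ = l.get ⟨k, hk⟩ := hξl k hk

lemma isCountablySpanning_range_cylinder : IsCountablySpanning (range (cylinder (I := I))) :=
  ⟨fun _ => cylinder [], fun _ => ⟨[], rfl⟩, by simp [cylinder_nil, iUnion_const]⟩

variable [MeasurableSpace I] [MeasurableSingletonClass I]

lemma measurableSet_cylinder (l : List I) : MeasurableSet (cylinder l) := by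
  have hcyl : cylinder l = ⋂ k : Fin l.length, (fun ξ : ℕ → I => ξ k) ⁻¹' {l.get k} := by
    ext ξ
    simp only [_root_.cylinder, mem_ofPred_eq, mem_iInter, mem_preimage, mem_singleton_iff]
    exact ⟨fun h k => h k k.2, fun h k hk => h ⟨k, hk⟩⟩
  rw [hcyl]
  exact MeasurableSet.iInter fun k => measurable_pi_apply _ (measurableSet_singleton _)

lemma generateFrom_range_cylinder [Countable I] :
    MeasurableSpace.generateFrom (range (cylinder (I := I))) = MeasurableSpace.pi := by
  refine le_antisymm (MeasurableSpace.generateFrom_le ?_) (iSup_le fun n => ?_)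
  · rintro _ ⟨l, rfl⟩
    exact measurableSet_cylinder l
  · refine Measurable.comap_le <| @measurable_to_countable' I (ℕ → I) _ _
      (MeasurableSpace.generateFrom (range cylinder)) (fun ξ => ξ n) fun i => ?_
    rw [show (fun ξ : ℕ → I => ξ n) ⁻¹' {i} = {ξ | ξ n = i} from rfl,
      setOf_apply_eq_iUnion_cylinder]
    exact MeasurableSet.iUnion fun v => MeasurableSpace.measurableSet_generateFrom ⟨_, rfl⟩

end Cylinders

lemma apply_prod_eq_lintegral_indicator {X Y : Type*} [MeasurableSpace X] [MeasurableSpace Y]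
    (μ : Measure X) (κ : X → Measure Y) (ν : Measure (X × Y))
    (hν : ∀ A : Set (X × Y), MeasurableSet A → ν A = ∫⁻ x, κ x {y | (x, y) ∈ A} ∂μ)
    {A : Set X} {B : Set Y} (hA : MeasurableSet A) (hB : MeasurableSet B) :
    ν (A ×ˢ B) = ∫⁻ x, A.indicator (fun x => κ x B) x ∂μ := by
  rw [hν _ (hA.prod hB)]
  refine lintegral_congr fun x => ?_
  by_cases hx : x ∈ A <;> simp [hx]

section IteratedFunctionSystem

variable {I X : Type*} [MeasurableSpace X] (S : I → X → X) (p : I → X → ℝ)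

lemma measurable_wtWord (hS : ∀ i, Measurable (S i)) (hp : ∀ i, Measurable (p i)) :
    ∀ l : List I, Measurable (wtWord S p l)
  | [] => measurable_const
  | i :: l => (hp i).mul ((measurable_wtWord hS hp l).comp (hS i))

variable [Fintype I]

lemma eq_sum_map_withDensity (hS : ∀ i, Measurable (S i)) (hp : ∀ i, Measurable (p i))
    (μ : Measure X)
    (hμinv : ∀ A : Set X, MeasurableSet A →
      μ A = ∫⁻ x, ∑ i : I, ENNReal.ofReal (p i x) *
        A.indicator (fun _ => (1 : ℝ≥0∞)) (S i x) ∂μ) :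
    μ = ∑ i, (μ.withDensity fun x => ENNReal.ofReal (p i x)).map (S i) := by
  ext A hA
  have hpA :
      ∀ i, Measurable fun x => (S i ⁻¹' A).indicator (fun x => ENNReal.ofReal (p i x)) x :=
    fun i => (hp i).ennreal_ofReal.indicator (hS i hA)
  have hterm : ∀ i x, ENNReal.ofReal (p i x) * A.indicator (fun _ => (1 : ℝ≥0∞)) (S i x) =
      (S i ⁻¹' A).indicator (fun x => ENNReal.ofReal (p i x)) x := by
    intro i x
    by_cases hx : S i x ∈ A <;> simp [hx]
  simp only [hμinv A hA, hterm, Measure.coe_finsetSum, Finset.sum_apply,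
    Measure.map_apply (hS _) hA, withDensity_apply _ (hS _ hA)]
  rw [lintegral_finsetSum _ fun i _ => hpA i]
  simp_rw [lintegral_indicator (hS _ hA)]

theorem lintegral_eq_lintegral_sum_mul_comp (hS : ∀ i, Measurable (S i))
    (hp : ∀ i, Measurable (p i)) (μ : Measure X)
    (hμinv : ∀ A : Set X, MeasurableSet A →
      μ A = ∫⁻ x, ∑ i : I, ENNReal.ofReal (p i x) *
        A.indicator (fun _ => (1 : ℝ≥0∞)) (S i x) ∂μ)
    {f : X → ℝ≥0∞} (hf : Measurable f) :
    ∫⁻ x, f x ∂μ = ∫⁻ x, ∑ i, ENNReal.ofReal (p i x) * f (S i x) ∂μ := by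
  conv_lhs => rw [eq_sum_map_withDensity S p hS hp μ hμinv]
  have hterm : ∀ i, Measurable fun x => ENNReal.ofReal (p i x) * f (S i x) :=
    fun i => (hp i).ennreal_ofReal.mul (hf.comp (hS i))
  rw [lintegral_finsetSum_measure, lintegral_finsetSum _ fun i _ => hterm i]
  refine Finset.sum_congr rfl fun i _ => ?_
  rw [lintegral_map hf (hS i)]
  exact lintegral_withDensity_eq_lintegral_mul _ (hp i).ennreal_ofReal (hf.comp (hS i))

end IteratedFunctionSystem

section SkewProduct

variable {I X : Type*} [MeasurableSpace I] [MeasurableSingletonClass I]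

def skewProduct (S : I → X → X) (z : X × (ℕ → I)) : X × (ℕ → I) :=
  (S (z.2 0) z.1, fun n => z.2 (n + 1))

lemma measurable_skewProduct [MeasurableSpace X] [Countable I] {S : I → X → X}
    (hS : ∀ i, Measurable (S i)) : Measurable (skewProduct S) := by
  have hSuncurry : Measurable fun q : X × I => S q.2 q.1 :=
    measurable_from_prod_countable_left hS
  have hfirst : Measurable fun z : X × (ℕ → I) => (z.1, z.2 0) :=
    measurable_fst.prodMk ((measurable_pi_apply 0).comp measurable_snd)
  exact (hSuncurry.comp hfirst).prodMk
    (measurable_pi_lambda _ fun n => (measurable_pi_apply (n + 1)).comp measurable_snd)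

lemma measure_skewProduct_slice [Fintype I] (S : I → X → X) (p : I → X → ℝ)
    (hp0 : ∀ i x, 0 ≤ p i x) (px : X → Measure (ℕ → I))
    (hpxcyl : ∀ (x : X) (l : List I), px x (cylinder l) = ENNReal.ofReal (wtWord S p l x))
    (x : X) (A : Set X) (l : List I) :
    px x {ω | skewProduct S (x, ω) ∈ A ×ˢ cylinder l} =
      ∑ i, ENNReal.ofReal (p i x) *
        A.indicator (fun y => ENNReal.ofReal (wtWord S p l y)) (S i x) := by
  classical
  have hslice : {ω | skewProduct S (x, ω) ∈ A ×ˢ cylinder l} =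
      ⋃ i ∈ Finset.univ.filter (fun i => S i x ∈ A), cylinder (i :: l) := by
    ext ω
    simp only [skewProduct, mem_ofPred_eq, mem_prod, Finset.mem_filter, Finset.mem_univ,
      true_and, mem_iUnion, mem_cylinder_cons, exists_prop]
    exact ⟨fun h => ⟨ω 0, h.1, rfl, h.2⟩, fun ⟨_, hi, h0, hc⟩ => h0 ▸ ⟨hi, hc⟩⟩
  have hdisj : PairwiseDisjoint (Finset.univ.filter (fun i => S i x ∈ A) : Set I)
      fun i => cylinder (i :: l) := fun i _ j _ hij =>
    disjoint_left.mpr fun ω hi hj =>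
      hij ((mem_cylinder_cons.mp hi).1.symm.trans (mem_cylinder_cons.mp hj).1)
  rw [hslice, measure_biUnion_finset hdisj fun i _ => measurableSet_cylinder _, Finset.sum_filter]
  refine Finset.sum_congr rfl fun i _ => ?_
  by_cases h : S i x ∈ A
  · rw [if_pos h, indicator_of_mem h, hpxcyl, wtWord, ENNReal.ofReal_mul (hp0 i x)]
  · rw [if_neg h, indicator_of_notMem h, mul_zero]

end SkewProduct

theorem stmt5 {X I : Type*} [MeasurableSpace X]
    [Fintype I] [MeasurableSpace I] [MeasurableSingletonClass I]
    (S : I → X → X) (hS : ∀ i, Measurable (S i))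
    (p : I → X → ℝ) (hp : ∀ i, Measurable (p i))
    (hp0 : ∀ i x, 0 ≤ p i x)
    (μ : Measure X) [IsProbabilityMeasure μ]
    (hμinv : ∀ A : Set X, MeasurableSet A →
      μ A = ∫⁻ x, ∑ i : I, ENNReal.ofReal (p i x) *
        A.indicator (fun _ => (1 : ℝ≥0∞)) (S i x) ∂μ)
    (px : X → Measure (ℕ → I))
    (hpxcyl : ∀ (x : X) (l : List I), px x (cylinder l) = ENNReal.ofReal (wtWord S p l x))
    (ν : Measure (X × (ℕ → I)))
    (hν : ∀ A : Set (X × (ℕ → I)), MeasurableSet A →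
      ν A = ∫⁻ x, px x {ω | (x, ω) ∈ A} ∂μ) :
    Measure.map (fun z : X × (ℕ → I) => (S (z.2 0) z.1, fun n => z.2 (n + 1))) ν = ν := by
  change ν.map (skewProduct S) = ν
  have hT := measurable_skewProduct hS
  have hν_rect : ∀ A, MeasurableSet A → ∀ l : List I, ν (A ×ˢ cylinder l) =
      ∫⁻ x, A.indicator (fun y => ENNReal.ofReal (wtWord S p l y)) x ∂μ := by
    intro A hA l
    simp_rw [apply_prod_eq_lintegral_indicator μ px ν hν hA (measurableSet_cylinder l), hpxcyl]
  have : IsFiniteMeasure ν :=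
    ⟨by simp [← univ_prod_univ, ← cylinder_nil, hν_rect univ .univ [], wtWord]⟩
  refine ext_of_generate_finite _
    (generateFrom_eq_prod MeasurableSpace.generateFrom_measurableSet generateFrom_range_cylinder
      isCountablySpanning_measurableSet isCountablySpanning_range_cylinder).symm
    (MeasurableSpace.isPiSystem_measurableSet.prod isPiSystem_range_cylinder) ?_
    (by rw [Measure.map_apply hT .univ, preimage_univ])
  rintro _ ⟨A, hA, _, ⟨l, rfl⟩, rfl⟩
  have hAl := hA.prod (measurableSet_cylinder l)
  rw [Measure.map_apply hT hAl, hν _ (hT hAl), hν_rect A hA l,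
    lintegral_eq_lintegral_sum_mul_comp S p hS hp μ hμinv
      ((measurable_wtWord S p hS hp l).ennreal_ofReal.indicator hA)]
  exact lintegral_congr fun x => measure_skewProduct_slice S p hp0 px hpxcyl x A l
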